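/- If w is an overlap-free binary word, then μ(w) is overlap-free, where μ(0)=01 and μ(1)=10. -/
import Mathlib


-- Words are lists over the binary alphabet `Bool` (0 = `false`, 1 = `true`).

/-- An overlap is a word of the form `u v u v u` with `u` nonempty. -/
def Overlap (w : List Bool) : Prop :=
  ∃ u v : List Bool, u ≠ [] ∧ w = u ++ v ++ u ++ v ++ u

/-- `u` is a factor of `w`. -/
def IsFactor (u w : List Bool) : Prop := ∃ x y, w = x ++ u ++ y

/-- `w` is overlap-free if no factor of `w` is an overlap. -/
def OverlapFree (w : List Bool) : Prop := ∀ f, IsFactor f w → ¬ Overlap f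

/-- `u` is a square at position `p` in `w` (there is an occurrence of `u u`
starting right after the prefix of length `p`). -/
def SquareAt (w : List Bool) (p : ℕ) (u : List Bool) : Prop :=
  ∃ x y, w = x ++ u ++ u ++ y ∧ x.length = p

/-- `p` is a centre of a square in `w`. -/
def CentreOfSquare (w : List Bool) (p : ℕ) : Prop :=
  ∃ u, u ≠ [] ∧ SquareAt w p u

open Classical in
/-- `M w` is the number of positions `p`, `1 ≤ p < |w|`, that are centres of squares in `w`. -/
noncomputable def M (w : List Bool) : ℕ :=
  ((Finset.Ico 1 w.length).filter (fun p => CentreOfSquare w p)).card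

/-- The Thue–Morse morphism: μ(0) = 01, μ(1) = 10. -/
def mu (w : List Bool) : List Bool :=
  w.flatMap (fun b => if b then [true, false] else [false, true])

/-- `tmWord n = μⁿ(0)`, the prefix of length `2 ^ n` of the Thue–Morse word. -/
def tmWord : ℕ → List Bool
  | 0 => [false]
  | n + 1 => mu (tmWord n)

/-- `u` is a factor of the (infinite) Thue–Morse word. -/
def IsTMFactor (u : List Bool) : Prop := ∃ k, IsFactor u (tmWord k)

/-- `alpha n` is the factor of the Thue–Morse word of length `3 * 2 ^ n` starting at
position 5 (1-indexed; i.e. after the first four letters, so that `alpha 1 = 100110`). -/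
def alpha (n : ℕ) : List Bool := ((tmWord (n + 3)).drop 4).take (3 * 2 ^ n)

/-- `v` is bordered if some nonempty strictly shorter word is both a prefix and a suffix of `v`. -/
def Bordered (v : List Bool) : Prop :=
  ∃ b : List Bool, b ≠ [] ∧ b.length < v.length ∧ b <+: v ∧ b <:+ v

/-- `u` is the minimal-length square at position `p` of `w`. -/
def MinSquareAt (w : List Bool) (p : ℕ) (u : List Bool) : Prop :=
  u ≠ [] ∧ SquareAt w p u ∧ ∀ u', u' ≠ [] → SquareAt w p u' → u.length ≤ u'.length

lemma mu_length (w : List Bool) : (mu w).length = 2 * w.length := by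
  induction w with
  | nil => rfl
  | cons b t ih => cases b <;> simp [mu, List.flatMap_cons] at ih ⊢ <;> omega

lemma mu_get (w : List Bool) (i : ℕ) :
    (mu w)[2*i]? = w[i]? ∧ (mu w)[2*i+1]? = (w[i]?).map (fun b => !b) := by
  induction w generalizing i with
  | nil => simp [mu]
  | cons b t ih =>
    cases i with
    | zero => cases b <;> simp [mu, List.flatMap_cons]
    | succ i =>
      rw [show 2*(i+1) = (2*i)+1+1 by ring]
      cases b <;> simpa [mu, List.flatMap_cons] using ih i

lemma period_of_overlap_factor (z f : List Bool) (hf : IsFactor f z) (ho : Overlap f) :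
    ∃ p q, 1 ≤ q ∧ p + 2*q < z.length ∧ ∀ j ≤ q, z[p+j]? = z[p+j+q]? := by
  obtain ⟨u, v, hu, hfeq⟩ := ho
  obtain ⟨x, y, hz⟩ := hf
  have hul : 1 ≤ u.length := List.length_pos_iff.mpr hu
  have hfl : f.length = 3*u.length + 2*v.length := by simp [hfeq]; ring
  refine ⟨x.length, u.length + v.length, by omega, ?_, ?_⟩
  · have : z.length = x.length + f.length + y.length := by simp [hz]; omega
    omega
  · intro j hj
    have hzf : ∀ i < f.length, z[x.length + i]? = f[i]? := by
      intro i hi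
      rw [hz, List.append_assoc, List.getElem?_append_right (by omega),
        List.getElem?_append_left (by simpa using hi)]
      congr 1
      omega
    rw [hzf j (by omega), show x.length + j + (u.length + v.length)
        = x.length + (j + (u.length + v.length)) by ring,
      hzf _ (by omega)]
    have e1 : f = (u ++ v ++ u) ++ (v ++ u) := by rw [hfeq]; simp [List.append_assoc]
    have e2 : f = (u ++ v) ++ (u ++ v ++ u) := by rw [hfeq]; simp [List.append_assoc]
    have hL : f[j]? = (u ++ v ++ u)[j]? := by
      rw [e1]; exact List.getElem?_append_left (by simp only [List.length_append]; omega)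
    have hR : f[j + (u.length + v.length)]? = (u ++ v ++ u)[j]? := by
      rw [e2, List.getElem?_append_right (by simp only [List.length_append]; omega)]
      congr 1
      simp only [List.length_append]
      omega
    rw [hL, hR]

lemma overlap_of_sq (s t : List Bool) (h : t ≠ []) (hs : s = t ++ (t ++ t.take 1)) :
    Overlap s := by
  obtain ⟨b, t', rfl⟩ := List.exists_cons_of_ne_nil h
  exact ⟨[b], t', by simp, by simpa using hs⟩

lemma overlapFree_of_no_period (w : List Bool)
    (p q : ℕ) (hq : 1 ≤ q) (hlen : p + 2*q < w.length)
    (hper : ∀ j ≤ q, w[p+j]? = w[p+j+q]?) : ¬ OverlapFree w := by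
  intro h
  set t := (w.drop p).take q with ht
  set s := (w.drop p).take (2*q+1) with hs
  have htl : t.length = q := by simp [ht]; omega
  have hsget : ∀ i : ℕ, s[i]? = if i < 2*q+1 then w[p+i]? else none := by
    intro i; rw [hs, List.getElem?_take, List.getElem?_drop]
  have htget : ∀ i : ℕ, t[i]? = if i < q then w[p+i]? else none := by
    intro i; rw [ht, List.getElem?_take, List.getElem?_drop]
  have hfac : IsFactor s w := by
    refine ⟨w.take p, w.drop (p + (2*q+1)), ?_⟩
    rw [hs, ← List.drop_drop]
    simp
  have hseq : s = t ++ (t ++ t.take 1) := by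
    apply List.ext_getElem?
    intro i
    rw [hsget i]
    rcases lt_or_ge i q with hi | hi
    · rw [List.getElem?_append_left (by omega), htget]
      simp only [if_pos hi, if_pos (show i < 2*q+1 by omega)]
    · rw [List.getElem?_append_right (by omega), htl]
      rcases lt_or_ge (i - q) q with hi2 | hi2
      · rw [List.getElem?_append_left (by omega), htget, if_pos hi2,
          if_pos (by omega : i < 2*q+1)]
        have h1 := hper (i - q) (by omega)
        rw [show p + (i-q) + q = p + i by omega] at h1
        exact h1.symm
      · rw [List.getElem?_append_right (by rwa [htl]), htl]
        rcases lt_or_ge i (2*q+1) with hi3 | hi3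
        · have hiq : i = 2*q := by omega
          rw [if_pos hi3, List.getElem?_take, htget]
          rw [hiq, show 2*q - q - q = 0 by omega]
          rw [if_pos (by omega : (0:ℕ) < 1), if_pos (by omega : (0:ℕ) < q)]
          have h1 := hper 0 (by omega)
          have h2 := hper q le_rfl
          simp only [Nat.add_zero] at h1
          rw [show p + 2*q = p + q + q by ring, ← h2, ← h1, Nat.add_zero]
        · rw [if_neg (by omega), List.getElem?_take, if_neg (by omega)]
  have htne : t ≠ [] := by
    intro hn; rw [hn] at htl; simp at htl; omega
  exact h s hfac (overlap_of_sq s t htne hseq)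

theorem stmt12 (w : List Bool) (h : OverlapFree w) :
    OverlapFree (mu w) := by
  intro f hf ho
  obtain ⟨p, q, hq, hlen, hper⟩ := period_of_overlap_factor _ f hf ho
  rw [mu_length] at hlen
  rcases Nat.even_or_odd q with ⟨m, hm⟩ | hoq
  · -- q even: overlap in w
    subst hm
    have hm1 : 1 ≤ m := by omega
    have key : ∃ i, i + 2*m < w.length ∧ ∀ t ≤ m, w[i+t]? = w[i+t+m]? := by
      rcases Nat.even_or_odd p with ⟨i, hp⟩ | ⟨i, hp⟩
      · refine ⟨i, by omega, fun t htm => ?_⟩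
        have hh := hper (2*t) (by omega)
        rw [show p + 2*t + (m+m) = 2*(i+t+m) by omega,
          show p + 2*t = 2*(i+t) by omega,
          (mu_get w (i+t)).1, (mu_get w (i+t+m)).1] at hh
        exact hh
      · refine ⟨i, by omega, fun t htm => ?_⟩
        have hh := hper (2*t) (by omega)
        rw [show p + 2*t + (m+m) = 2*(i+t+m)+1 by omega,
          show p + 2*t = 2*(i+t)+1 by omega,
          (mu_get w (i+t)).2, (mu_get w (i+t+m)).2] at hh
        have hinj : Function.Injective (fun b : Bool => !b) := by decide
        exact Option.map_injective hinj hh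
    obtain ⟨i, hilen, hiper⟩ := key
    exact overlapFree_of_no_period w i m hm1 hilen hiper h
  · -- q odd: direct contradiction
    have hblk : ∀ i, 2*i+1 < 2*w.length → (mu w)[2*i]? ≠ (mu w)[2*i+1]? := by
      intro i hi
      rw [(mu_get w i).1, (mu_get w i).2,
        List.getElem?_eq_getElem (show i < w.length by omega)]
      simp
    have hstep : ∀ j < q, (mu w)[p+j]? ≠ (mu w)[p+j+1]? := by
      intro j hj
      rcases Nat.even_or_odd (p+j) with ⟨i, hpj⟩ | ⟨i, hpj⟩
      · have hh := hblk i (by omega)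
        rwa [show 2*i = p+j by omega] at hh
      · obtain ⟨k, hk⟩ := hoq
        have hev : p + j + q = 2*(i + k + 1) := by omega
        have hne := hblk (i+k+1) (by omega)
        rw [← hev] at hne
        rw [hper j (by omega), show p+j+1 = p+(j+1) by ring, hper (j+1) (by omega),
          show p+(j+1)+q = p+j+q+1 by ring]
        exact hne
    obtain ⟨b0, hb0⟩ : ∃ b0, (mu w)[p]? = some b0 :=
      ⟨_, List.getElem?_eq_getElem (show p < (mu w).length by rw [mu_length]; omega)⟩
    have hval : ∀ j ≤ q, (mu w)[p+j]? = some (if Even j then b0 else !b0) := by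
      intro j
      induction j with
      | zero => intro _; simpa using hb0
      | succ j ih =>
        intro hj
        have hvj := ih (by omega)
        obtain ⟨b1, hb1⟩ : ∃ b1, (mu w)[p+(j+1)]? = some b1 :=
          ⟨_, List.getElem?_eq_getElem (show p+(j+1) < (mu w).length by rw [mu_length]; omega)⟩
        have hne := hstep j (by omega)
        rw [hvj, show p+j+1 = p+(j+1) by ring, hb1] at hne
        have hb1v : b1 = !(if Even j then b0 else !b0) := by
          revert hne
          cases b1 <;> cases (if Even j then b0 else !b0) <;> simp
        rw [hb1, hb1v]
        by_cases hev : Even j <;> simp [Nat.even_add_one, hev]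
    have h0 := hval 0 (by omega)
    have hq' := hval q le_rfl
    have hpq := hper 0 (by omega)
    simp only [Nat.add_zero] at hpq h0
    have hqe : ¬ Even q := by
      rw [Nat.even_iff]
      rw [Nat.odd_iff] at hoq
      omega
    rw [h0, hq', if_pos (Even.zero), if_neg hqe] at hpq
    simp at hpq
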